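/- Let n ≥ 1, p ≥ 2, κ ∈ [0,1], c ≥ 1, γ ∈ [1/(p−1), 1], let E(ξ) = (|ξ| + κ)^{γp − γ − 1} ξ, and let A : ℝⁿ → ℝⁿ be continuously differentiable with ⟨∂_z A(z) ζ, ζ⟩ ≥ c^{−1} (|z|² + κ²)^{(p−2)/2} |ζ|² for all z, ζ ∈ ℝⁿ. Then there is a constant C = C(p, γ, c) > 0 such that for all ξ, ζ ∈ ℝⁿ, |E(ξ) − E(ζ)|^{1/γ} ≤ C |A(ξ) − A(ζ)|. -/

import Mathlib

/-! Write `S = ‖ξ‖ + ‖ζ‖ + κ` and `α = γ(p - 1) - 1 ≥ 0`. Splitting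
`E ξ - E ζ = (‖ξ‖ + κ)^α (ξ - ζ) + ((‖ξ‖ + κ)^α - (‖ζ‖ + κ)^α) ζ` and applying the mean value
theorem to `t ↦ t^α` gives `‖E ξ - E ζ‖ ≤ (1 + α) S^α ‖ξ - ζ‖`. On the quarter of the segment
`[ζ, ξ]` next to the longer endpoint the ellipticity weight is at least `(S/8)^(p-2)`, so
differentiating `t ↦ ⟪A (ζ + t (ξ - ζ)), ξ - ζ⟫` and using Cauchy–Schwarz gives
`S^(p-2) ‖ξ - ζ‖ ≲ ‖A ξ - A ζ‖`. Finally `‖ξ - ζ‖ ≤ S` and `1/γ ≥ 1` give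
`(S^α ‖ξ - ζ‖)^(1/γ) ≤ S^((α+1)/γ - 1) ‖ξ - ζ‖ = S^(p-2) ‖ξ - ζ‖`. -/

open scoped RealInnerProductSpace

open Real Set

lemma rpow_sub_rpow_mul_le {a b α : ℝ} (hb : 0 ≤ b) (hba : b ≤ a) (hα : 0 ≤ α) :
    (a ^ α - b ^ α) * b ≤ α * a ^ α * (a - b) := by
  rcases hb.eq_or_lt with rfl | hb
  · have ha : 0 ≤ a := hba
    simp only [mul_zero, sub_zero]
    positivity
  rcases hba.eq_or_lt with rfl | hba
  · simp
  have hpos : ∀ x ∈ Icc b a, x ≠ 0 := fun x hx => (hb.trans_le hx.1).ne'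
  obtain ⟨x, ⟨hbx, hxa⟩, hx⟩ := exists_hasDerivAt_eq_slope (fun x : ℝ => x ^ α)
    (fun x => α * x ^ (α - 1)) hba
    (continuousOn_id.rpow_const fun x hx => Or.inl (hpos x hx))
    (fun x hx => hasDerivAt_rpow_const (Or.inl (hpos x (Ioo_subset_Icc_self hx))))
  have hx0 : 0 < x := hb.trans hbx
  rw [eq_div_iff (sub_pos.2 hba).ne'] at hx
  calc (a ^ α - b ^ α) * b = α * (b * x ^ (α - 1)) * (a - b) := by rw [← hx]; ring
    _ ≤ α * (x * x ^ (α - 1)) * (a - b) := by gcongr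
    _ = α * x ^ α * (a - b) := by rw [rpow_sub_one hx0.ne', mul_div_cancel₀ _ hx0.ne']
    _ ≤ α * a ^ α * (a - b) := by gcongr

lemma norm_rpow_smul_sub_rpow_smul_le {V : Type*} [NormedAddCommGroup V] [NormedSpace ℝ V]
    {κ α : ℝ} (hκ : 0 ≤ κ) (hα : 0 ≤ α) (ξ ζ : V) :
    ‖(‖ξ‖ + κ) ^ α • ξ - (‖ζ‖ + κ) ^ α • ζ‖ ≤ (1 + α) * (‖ξ‖ + ‖ζ‖ + κ) ^ α * ‖ξ - ζ‖ := by
  wlog hle : ‖ζ‖ ≤ ‖ξ‖ generalizing ξ ζ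
  · simpa only [norm_sub_rev, add_comm ‖ζ‖] using this ζ ξ (le_of_not_ge hle)
  set a := ‖ξ‖ + κ
  set b := ‖ζ‖ + κ
  set S := ‖ξ‖ + ‖ζ‖ + κ
  have hb : 0 ≤ b := by positivity
  have hba : b ≤ a := by linarith
  have haS : a ≤ S := by linarith [norm_nonneg ζ]
  have hab : a - b ≤ ‖ξ - ζ‖ := by linarith [norm_sub_norm_le ξ ζ]
  have hdiff : 0 ≤ a ^ α - b ^ α := sub_nonneg.2 (by gcongr)
  have hsplit : a ^ α • ξ - b ^ α • ζ = a ^ α • (ξ - ζ) + (a ^ α - b ^ α) • ζ := by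
    rw [smul_sub, sub_smul]; abel
  have hfirst : ‖a ^ α • (ξ - ζ)‖ ≤ S ^ α * ‖ξ - ζ‖ := by
    rw [norm_smul, norm_of_nonneg (by positivity)]; gcongr
  have hsecond : ‖(a ^ α - b ^ α) • ζ‖ ≤ α * S ^ α * ‖ξ - ζ‖ :=
    calc ‖(a ^ α - b ^ α) • ζ‖ = (a ^ α - b ^ α) * ‖ζ‖ := by rw [norm_smul, norm_of_nonneg hdiff]
      _ ≤ (a ^ α - b ^ α) * b := by gcongr; linarith
      _ ≤ α * a ^ α * (a - b) := rpow_sub_rpow_mul_le hb hba hα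
      _ ≤ α * S ^ α * ‖ξ - ζ‖ := by gcongr
  calc ‖a ^ α • ξ - b ^ α • ζ‖ ≤ ‖a ^ α • (ξ - ζ)‖ + ‖(a ^ α - b ^ α) • ζ‖ := by
        rw [hsplit]; exact norm_add_le _ _
    _ ≤ (1 + α) * S ^ α * ‖ξ - ζ‖ := by linarith

lemma half_add_rpow_le_sq_add_sq_rpow {x y q : ℝ} (hx : 0 ≤ x) (hy : 0 ≤ y) (hq : 0 ≤ q) :
    ((x + y) / 2) ^ q ≤ (x ^ 2 + y ^ 2) ^ (q / 2) :=
  calc ((x + y) / 2) ^ q = (((x + y) / 2) ^ (2 : ℝ)) ^ (q / 2) := by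
        rw [← rpow_mul (by positivity)]; ring_nf
    _ ≤ (x ^ 2 + y ^ 2) ^ (q / 2) := by
        gcongr
        rw [rpow_two]
        nlinarith [sq_nonneg (x - y)]

lemma add_norm_div_four_le_norm_add_smul_sub {V : Type*} [NormedAddCommGroup V]
    [NormedSpace ℝ V] {ξ ζ : V} (hle : ‖ζ‖ ≤ ‖ξ‖) {t : ℝ} (ht : t ∈ Icc (3 / 4 : ℝ) 1) :
    (‖ξ‖ + ‖ζ‖) / 4 ≤ ‖ζ + t • (ξ - ζ)‖ := by
  obtain ⟨ht₁, ht₂⟩ := ht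
  have hrw : ζ + t • (ξ - ζ) = t • ξ - -((1 - t) • ζ) := by
    rw [smul_sub, sub_smul, one_smul]; abel
  have := norm_sub_norm_le (t • ξ) (-((1 - t) • ζ))
  rw [← hrw, norm_neg, norm_smul, norm_smul, norm_of_nonneg (by linarith),
    norm_of_nonneg (by linarith : (0 : ℝ) ≤ 1 - t)] at this
  nlinarith [norm_nonneg ζ]

lemma hasDerivAt_inner_apply_add_smul {V : Type*} [NormedAddCommGroup V]
    [InnerProductSpace ℝ V] {A : V → V} {ζ w : V} {t : ℝ}
    (hA : DifferentiableAt ℝ A (ζ + t • w)) :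
    HasDerivAt (fun s : ℝ => ⟪A (ζ + s • w), w⟫) ⟪fderiv ℝ A (ζ + t • w) w, w⟫ t := by
  have hline : HasDerivAt (fun s : ℝ => ζ + s • w) w t := by
    simpa using ((hasDerivAt_id t).smul_const w).const_add ζ
  simpa using (hA.hasFDerivAt.comp_hasDerivAt t hline).inner ℝ (hasDerivAt_const t w)

section Ellipticity

variable {V : Type*} [NormedAddCommGroup V] [InnerProductSpace ℝ V] {A : V → V} {p κ c : ℝ}

lemma le_inner_map_sub_of_norm_le (hp : 2 ≤ p) (hκ : 0 ≤ κ) (hc : 0 < c)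
    (hA : Differentiable ℝ A)
    (hell : ∀ z w : V, c⁻¹ * (‖z‖ ^ 2 + κ ^ 2) ^ ((p - 2) / 2) * ‖w‖ ^ 2 ≤ ⟪fderiv ℝ A z w, w⟫)
    {ξ ζ : V} (hle : ‖ζ‖ ≤ ‖ξ‖) :
    c⁻¹ * ((‖ξ‖ + ‖ζ‖ + κ) / 8) ^ (p - 2) * ‖ξ - ζ‖ ^ 2 / 4 ≤ ⟪A ξ - A ζ, ξ - ζ⟫ := by
  set w := ξ - ζ
  set g : ℝ → ℝ := fun s : ℝ => ⟪A (ζ + s • w), w⟫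
  have hg : ∀ t : ℝ, HasDerivAt g ⟪fderiv ℝ A (ζ + t • w) w, w⟫ t := fun t =>
    hasDerivAt_inner_apply_add_smul (hA _)
  have hg_nonneg : ∀ t : ℝ, 0 ≤ ⟪fderiv ℝ A (ζ + t • w) w, w⟫ := fun t =>
    le_trans (by positivity) (hell _ _)
  -- On the quarter of the segment next to the longer endpoint, `‖z‖ ≥ (‖ξ‖ + ‖ζ‖) / 4`.
  have hg_large : ∀ t ∈ Icc (3 / 4 : ℝ) 1,
      c⁻¹ * ((‖ξ‖ + ‖ζ‖ + κ) / 8) ^ (p - 2) * ‖w‖ ^ 2 ≤ ⟪fderiv ℝ A (ζ + t • w) w, w⟫ := by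
    intro t ht
    refine le_trans ?_ (hell _ _)
    have hz : (‖ξ‖ + ‖ζ‖) / 4 ≤ ‖ζ + t • w‖ := add_norm_div_four_le_norm_add_smul_sub hle ht
    gcongr
    calc ((‖ξ‖ + ‖ζ‖ + κ) / 8) ^ (p - 2) ≤ ((‖ζ + t • w‖ + κ) / 2) ^ (p - 2) :=
          rpow_le_rpow (by positivity) (by linarith) (by linarith)
      _ ≤ _ := half_add_rpow_le_sq_add_sq_rpow (norm_nonneg _) hκ (by linarith)
  obtain ⟨t, ⟨ht₁, ht₂⟩, hslope⟩ := exists_hasDerivAt_eq_slope g _ (by norm_num : (3 / 4 : ℝ) < 1)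
    (fun s _ => (hg s).continuousAt.continuousWithinAt) (fun s _ => hg s)
  have hmono : g 0 ≤ g (3 / 4) := monotone_of_hasDerivAt_nonneg hg hg_nonneg (by norm_num)
  have hlast := hg_large t ⟨ht₁.le, ht₂.le⟩
  rw [hslope, le_div_iff₀ (by norm_num)] at hlast
  have hg1 : g 1 = ⟪A ξ, w⟫ := by simp [g, w]
  have hg0 : g 0 = ⟪A ζ, w⟫ := by simp [g]
  rw [inner_sub_left, ← hg1, ← hg0]
  linarith

lemma rpow_mul_norm_sub_le_of_ellipticity (hp : 2 ≤ p) (hκ : 0 ≤ κ) (hc : 0 < c)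
    (hA : Differentiable ℝ A)
    (hell : ∀ z w : V, c⁻¹ * (‖z‖ ^ 2 + κ ^ 2) ^ ((p - 2) / 2) * ‖w‖ ^ 2 ≤ ⟪fderiv ℝ A z w, w⟫)
    (ξ ζ : V) :
    (‖ξ‖ + ‖ζ‖ + κ) ^ (p - 2) * ‖ξ - ζ‖ ≤ 4 * c * 8 ^ (p - 2) * ‖A ξ - A ζ‖ := by
  wlog hle : ‖ζ‖ ≤ ‖ξ‖ generalizing ξ ζ
  · simpa only [norm_sub_rev, add_comm ‖ζ‖] using this ζ ξ (le_of_not_ge hle)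
  rcases (norm_nonneg (ξ - ζ)).eq_or_lt with hd | hd
  · rw [← hd, mul_zero]; positivity
  have key := (le_inner_map_sub_of_norm_le hp hκ hc hA hell hle).trans
    (real_inner_le_norm _ _)
  rw [div_rpow (by positivity) (by norm_num)] at key
  refine le_of_mul_le_mul_right ?_ hd
  calc (‖ξ‖ + ‖ζ‖ + κ) ^ (p - 2) * ‖ξ - ζ‖ * ‖ξ - ζ‖
      = 4 * c * 8 ^ (p - 2) *
          (c⁻¹ * ((‖ξ‖ + ‖ζ‖ + κ) ^ (p - 2) / 8 ^ (p - 2)) * ‖ξ - ζ‖ ^ 2 / 4) := by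
        field_simp
    _ ≤ 4 * c * 8 ^ (p - 2) * (‖A ξ - A ζ‖ * ‖ξ - ζ‖) := by gcongr
    _ = 4 * c * 8 ^ (p - 2) * ‖A ξ - A ζ‖ * ‖ξ - ζ‖ := by ring

end Ellipticity

lemma mul_rpow_mul_rpow_one_div_le {m S d α γ : ℝ} (hm : 0 ≤ m) (hd : 0 ≤ d) (hdS : d ≤ S)
    (hγ₀ : 0 < γ) (hγ₁ : γ ≤ 1) :
    (m * S ^ α * d) ^ (1 / γ) ≤ m ^ (1 / γ) * S ^ ((α + 1) / γ - 1) * d := by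
  rcases hd.eq_or_lt with rfl | hd
  · rw [mul_zero, mul_zero, zero_rpow (by positivity)]
  have hS : 0 < S := hd.trans_le hdS
  have hγ : 1 ≤ 1 / γ := by rw [le_div_iff₀ hγ₀]; linarith
  have hratio : (d / S) ^ (1 / γ) ≤ d / S := by
    simpa using rpow_le_rpow_of_exponent_ge (div_pos hd hS) ((div_le_one hS).2 hdS) hγ
  calc (m * S ^ α * d) ^ (1 / γ) = m ^ (1 / γ) * (S ^ (α + 1)) ^ (1 / γ) * (d / S) ^ (1 / γ) := by
        rw [← mul_rpow hm (by positivity), ← mul_rpow (by positivity) (by positivity),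
          rpow_add_one hS.ne']
        field_simp
    _ ≤ m ^ (1 / γ) * (S ^ (α + 1)) ^ (1 / γ) * (d / S) := by gcongr
    _ = m ^ (1 / γ) * S ^ ((α + 1) / γ - 1) * d := by
        rw [← rpow_mul hS.le, rpow_sub_one hS.ne', mul_one_div]
        field_simp

theorem statement5_general (n : ℕ) (p κ c γ : ℝ) (hp : 2 ≤ p)
    (hκ : κ ∈ Set.Icc (0:ℝ) 1) (hc : 1 ≤ c) (hγ : γ ∈ Set.Icc (1/(p-1)) 1)
    (E : EuclideanSpace ℝ (Fin n) → EuclideanSpace ℝ (Fin n))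
    (hE : ∀ ξ : EuclideanSpace ℝ (Fin n), E ξ = ((‖ξ‖ + κ) ^ (γ * p - γ - 1)) • ξ)
    (A : EuclideanSpace ℝ (Fin n) → EuclideanSpace ℝ (Fin n))
    (hA : ContDiff ℝ 1 A)
    (hell : ∀ z ζ : EuclideanSpace ℝ (Fin n),
      c⁻¹ * (‖z‖ ^ 2 + κ ^ 2) ^ ((p - 2) / 2) * ‖ζ‖ ^ 2 ≤ ⟪fderiv ℝ A z ζ, ζ⟫) :
    ∃ C : ℝ, 0 < C ∧ ∀ ξ ζ : EuclideanSpace ℝ (Fin n),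
      ‖E ξ - E ζ‖ ^ (1/γ) ≤ C * ‖A ξ - A ζ‖ := by
  obtain ⟨hκ₀, -⟩ := hκ
  obtain ⟨hγ₀, hγ₁⟩ := hγ
  have hγ : 0 < γ := (one_div_pos.2 (by linarith)).trans_le hγ₀
  have hα : 0 ≤ γ * p - γ - 1 := by rw [div_le_iff₀ (by linarith)] at hγ₀; linarith
  have hexp : (γ * p - γ - 1 + 1) / γ - 1 = p - 2 := by field_simp; ring
  refine ⟨(1 + (γ * p - γ - 1)) ^ (1 / γ) * (4 * c * 8 ^ (p - 2)), by positivity, fun ξ ζ => ?_⟩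
  have hdS : ‖ξ - ζ‖ ≤ ‖ξ‖ + ‖ζ‖ + κ := (norm_sub_le ξ ζ).trans (by linarith)
  calc ‖E ξ - E ζ‖ ^ (1 / γ)
      ≤ ((1 + (γ * p - γ - 1)) * (‖ξ‖ + ‖ζ‖ + κ) ^ (γ * p - γ - 1) * ‖ξ - ζ‖) ^ (1 / γ) := by
        rw [hE, hE]; gcongr; exact norm_rpow_smul_sub_rpow_smul_le hκ₀ hα ξ ζ
    _ ≤ (1 + (γ * p - γ - 1)) ^ (1 / γ) * ((‖ξ‖ + ‖ζ‖ + κ) ^ (p - 2) * ‖ξ - ζ‖) := by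
        rw [← mul_assoc, ← hexp]
        exact mul_rpow_mul_rpow_one_div_le (by linarith) (norm_nonneg _) hdS hγ hγ₁
    _ ≤ (1 + (γ * p - γ - 1)) ^ (1 / γ) * (4 * c * 8 ^ (p - 2) * ‖A ξ - A ζ‖) := by
        gcongr ?_ * ?_
        exact rpow_mul_norm_sub_le_of_ellipticity hp hκ₀ (by linarith)
          (hA.differentiable one_ne_zero) hell ξ ζ
    _ = _ := by ring

/-- For `p ≥ 2`, `κ ∈ [0,1]`, `c ≥ 1`, `γ ∈ [1/(p-1), 1]`,
`E(ξ) = (|ξ| + κ)^(γp - γ - 1) ξ`, and `A : ℝⁿ → ℝⁿ` continuously differentiable with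
`⟨∂A(z)ζ, ζ⟩ ≥ c⁻¹ (|z|² + κ²)^((p-2)/2) |ζ|²`, there exists `C = C(p,γ,c) > 0` such that
`|E(ξ) - E(ζ)|^(1/γ) ≤ C |A(ξ) - A(ζ)|` for all `ξ, ζ ∈ ℝⁿ`. -/
theorem statement5 (n : ℕ) (hn : 1 ≤ n) (p κ c γ : ℝ) (hp : 2 ≤ p)
    (hκ : κ ∈ Set.Icc (0:ℝ) 1) (hc : 1 ≤ c) (hγ : γ ∈ Set.Icc (1/(p-1)) 1)
    (E : EuclideanSpace ℝ (Fin n) → EuclideanSpace ℝ (Fin n))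
    (hE : ∀ ξ : EuclideanSpace ℝ (Fin n), E ξ = ((‖ξ‖ + κ) ^ (γ * p - γ - 1)) • ξ)
    (A : EuclideanSpace ℝ (Fin n) → EuclideanSpace ℝ (Fin n))
    (hA : ContDiff ℝ 1 A)
    (hell : ∀ z ζ : EuclideanSpace ℝ (Fin n),
      c⁻¹ * (‖z‖ ^ 2 + κ ^ 2) ^ ((p - 2) / 2) * ‖ζ‖ ^ 2 ≤ ⟪fderiv ℝ A z ζ, ζ⟫) :
    ∃ C : ℝ, 0 < C ∧ ∀ ξ ζ : EuclideanSpace ℝ (Fin n),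
      ‖E ξ - E ζ‖ ^ (1/γ) ≤ C * ‖A ξ - A ζ‖ :=
  statement5_general n p κ c γ hp hκ hc hγ E hE A hA hell
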